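/- arXiv:2407.15113 — 2 statements merged into one kernel-verified Lean document; each statement's English description precedes it below -/
import Mathlib

section
/- Let A, B, C be complex matrices with A ∈ ℂ^{m×m}, B ∈ ℂ^{n×n}, C ∈ ℂ^{m×n}, where A is positive semidefinite and B, B₀ ∈ ℂ^{n×n} are positive definite. Then for any C₀ ∈ ℂ^{m×n}: Tr(A C B⁻¹ Cᴴ) ≥ Tr(A C₀ B₀⁻¹ C₀ᴴ) − Tr(A C₀ B₀⁻¹ (B − B₀) B₀⁻¹ C₀ᴴ) + Tr(A (C − C₀) B₀⁻¹ C₀ᴴ) + Tr(A C₀ B₀⁻¹ (C − C₀)ᴴ). -/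
open Matrix ComplexOrder

lemma psd_trace_nonneg {k : ℕ} {M : Matrix (Fin k) (Fin k) ℂ} (hM : M.PosSemidef) :
    0 ≤ M.trace := by
  rw [Matrix.trace]
  apply Finset.sum_nonneg
  intro i _
  exact hM.diag_nonneg

open scoped MatrixOrder in
lemma psd_trace_mul_nonneg {k : ℕ} {P M : Matrix (Fin k) (Fin k) ℂ}
    (hP : P.PosSemidef) (hM : M.PosSemidef) : 0 ≤ (P * M).trace := by
  have hS : (CFC.sqrt P).PosSemidef := (CFC.sqrt_nonneg P).posSemidef
  have h1 : P * M = CFC.sqrt P * (CFC.sqrt P * M) := by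
    rw [← Matrix.mul_assoc, CFC.sqrt_mul_sqrt_self P hP.nonneg]
  rw [h1, Matrix.trace_mul_comm]
  have : CFC.sqrt P * M * CFC.sqrt P = CFC.sqrt P * M * (CFC.sqrt P)ᴴ := by rw [hS.isHermitian.eq]
  rw [this]
  exact psd_trace_nonneg (hM.mul_mul_conjTranspose_same _)

/-- Matrix-fractional lower bound: `(C, B) ↦ Tr(A C B⁻¹ Cᴴ)` (with `A` PSD and
`B` positive definite) lies above its first-order expansion at `(C₀, B₀)`. -/
theorem matrix_fractional_lower_bound
    {m n : ℕ}
    (A : Matrix (Fin m) (Fin m) ℂ) (hA : A.PosSemidef)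
    (B B₀ : Matrix (Fin n) (Fin n) ℂ) (hB : B.PosDef) (hB₀ : B₀.PosDef)
    (C C₀ : Matrix (Fin m) (Fin n) ℂ) :
    (Matrix.trace (A * C * B⁻¹ * Cᴴ)).re ≥
      (Matrix.trace (A * C₀ * B₀⁻¹ * C₀ᴴ)).re
        - (Matrix.trace (A * C₀ * B₀⁻¹ * (B - B₀) * B₀⁻¹ * C₀ᴴ)).re
        + (Matrix.trace (A * (C - C₀) * B₀⁻¹ * C₀ᴴ)).re
        + (Matrix.trace (A * C₀ * B₀⁻¹ * (C - C₀)ᴴ)).re := by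
  set D : Matrix (Fin m) (Fin n) ℂ := C - C₀ * B₀⁻¹ * B with hD
  have hBdet : IsUnit B.det := isUnit_iff_isUnit_det _ |>.1 hB.isUnit
  have hB₀det : IsUnit B₀.det := isUnit_iff_isUnit_det _ |>.1 hB₀.isUnit
  have hDH : Dᴴ = Cᴴ - B * B₀⁻¹ * C₀ᴴ := by
    rw [hD]
    simp only [conjTranspose_sub, conjTranspose_mul, conjTranspose_nonsing_inv,
      hB.isHermitian.eq, hB₀.isHermitian.eq, Matrix.mul_assoc]
  have key : Matrix.trace (A * C * B⁻¹ * Cᴴ) =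
      Matrix.trace (A * C₀ * B₀⁻¹ * C₀ᴴ)
        - Matrix.trace (A * C₀ * B₀⁻¹ * (B - B₀) * B₀⁻¹ * C₀ᴴ)
        + Matrix.trace (A * (C - C₀) * B₀⁻¹ * C₀ᴴ)
        + Matrix.trace (A * C₀ * B₀⁻¹ * (C - C₀)ᴴ)
        + Matrix.trace (A * D * B⁻¹ * Dᴴ) := by
    rw [hDH, hD]
    simp only [conjTranspose_sub, Matrix.mul_sub, Matrix.sub_mul, Matrix.mul_assoc,
      Matrix.nonsing_inv_mul_cancel_left _ _ hBdet,
      Matrix.mul_nonsing_inv_cancel_left _ _ hBdet,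
      Matrix.nonsing_inv_mul_cancel_left _ _ hB₀det,
      Matrix.mul_nonsing_inv_cancel_left _ _ hB₀det,
      trace_sub, trace_add]
    ring_nf
  have hpsd : 0 ≤ Matrix.trace (A * D * B⁻¹ * Dᴴ) := by
    have h2 : A * D * B⁻¹ * Dᴴ = A * (D * B⁻¹ * Dᴴ) := by
      simp only [Matrix.mul_assoc]
    rw [h2]
    exact psd_trace_mul_nonneg hA ((hB.inv.posSemidef).mul_mul_conjTranspose_same D)
  have h0 : 0 ≤ (Matrix.trace (A * D * B⁻¹ * Dᴴ)).re := hpsd.1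
  rw [key]
  simp only [Complex.add_re, Complex.sub_re]
  linarith
end

section
/- Let |α|² ≥ 0 and β > 0, and let α₀ ∈ ℂ, β₀ > 0. Then ln(1 + |α|²/β) ≥ ln(1 + |α₀|²/β₀) − |α₀|²/β₀ + 2Re{α₀* α}/β₀ − (|α₀|²/(β₀(β₀ + |α₀|²))) (β + |α|²). -/
/-!
Write `x = a²/β` and `S = β + a²`, so that `1 + x = S/β`. The bound `1 - 1/t ≤ log t`, applied
to `t = (1 + x)/(1 + x₀)`, gives `log(1 + x) ≥ log(1 + x₀) - x₀ + (1 + x₀) a²/S`. The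
quadratic-over-linear function `a²/S` is jointly convex and thus lies above its tangent plane
`2ua - u²S`; at `u = a₀/(β₀ + a₀²)` this turns `(1 + x₀) a²/S` into the affine expression
`2a₀a/β₀ - a₀²S/(β₀(β₀ + a₀²))`. Finally `Re(conj α₀ · α) ≤ |α₀||α|`.
-/

open Real

lemma Real.log_add_one_sub_div_le_log {x y : ℝ} (hx : 0 < x) (hy : 0 < y) :
    log y + 1 - y / x ≤ log x := by
  have h := one_sub_inv_le_log_of_pos (div_pos hx hy)
  rw [log_div hx.ne' hy.ne', inv_div] at h
  linarith

lemma two_mul_mul_sub_sq_mul_le_sq_div (a u : ℝ) {S : ℝ} (hS : 0 < S) :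
    2 * u * a - u ^ 2 * S ≤ a ^ 2 / S := by
  rw [le_div_iff₀ hS]
  nlinarith [sq_nonneg (a - u * S)]

lemma log_one_add_sq_div_ge (a a₀ : ℝ) {β β₀ : ℝ} (hβ : 0 < β) (hβ₀ : 0 < β₀) :
    log (1 + a₀ ^ 2 / β₀) - a₀ ^ 2 / β₀ + 2 * (a₀ * a) / β₀
        - (a₀ ^ 2 / (β₀ * (β₀ + a₀ ^ 2))) * (β + a ^ 2)
      ≤ log (1 + a ^ 2 / β) := by
  set S := β + a ^ 2
  have hS : 0 < S := by positivity
  have hlog := log_add_one_sub_div_le_log (x := 1 + a ^ 2 / β) (y := 1 + a₀ ^ 2 / β₀)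
    (by positivity) (by positivity)
  have hratio : (1 + a₀ ^ 2 / β₀) / (1 + a ^ 2 / β) = (1 + a₀ ^ 2 / β₀) * (1 - a ^ 2 / S) := by
    field_simp
    ring
  have htangent : (1 + a₀ ^ 2 / β₀) * (2 * (a₀ / (β₀ + a₀ ^ 2)) * a - (a₀ / (β₀ + a₀ ^ 2)) ^ 2 * S)
      ≤ (1 + a₀ ^ 2 / β₀) * (a ^ 2 / S) :=
    mul_le_mul_of_nonneg_left (two_mul_mul_sub_sq_mul_le_sq_div a _ hS) (by positivity)
  have haffine : (1 + a₀ ^ 2 / β₀) * (2 * (a₀ / (β₀ + a₀ ^ 2)) * a - (a₀ / (β₀ + a₀ ^ 2)) ^ 2 * S)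
      = 2 * (a₀ * a) / β₀ - (a₀ ^ 2 / (β₀ * (β₀ + a₀ ^ 2))) * S := by
    field_simp
  rw [hratio] at hlog
  linarith

/-- Concave lower bound on the SINR rate function `ln(1 + |α|²/β)` around the
point `(α₀, β₀)` (Nasir et al.). -/
theorem sinr_rate_lower_bound
    (α α₀ : ℂ) (β β₀ : ℝ) (hβ : 0 < β) (hβ₀ : 0 < β₀) :
    Real.log (1 + ‖α‖ ^ 2 / β) ≥
      Real.log (1 + ‖α₀‖ ^ 2 / β₀) - ‖α₀‖ ^ 2 / β₀
        + 2 * ((starRingEnd ℂ) α₀ * α).re / β₀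
        - (‖α₀‖ ^ 2 / (β₀ * (β₀ + ‖α₀‖ ^ 2))) * (β + ‖α‖ ^ 2) := by
  have hre : ((starRingEnd ℂ) α₀ * α).re ≤ ‖α₀‖ * ‖α‖ := by
    calc ((starRingEnd ℂ) α₀ * α).re ≤ ‖(starRingEnd ℂ) α₀ * α‖ := Complex.re_le_norm _
      _ = ‖α₀‖ * ‖α‖ := by rw [norm_mul, RCLike.norm_conj]
  have hcross : 2 * ((starRingEnd ℂ) α₀ * α).re / β₀ ≤ 2 * (‖α₀‖ * ‖α‖) / β₀ := by
    gcongr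
  linarith [log_one_add_sq_div_ge ‖α‖ ‖α₀‖ hβ hβ₀]
end
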